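/- For all integers m ≥ 1 and n ≥ 4 with mn even, the armed crown graph G obtained from the cycle C_n and paths P_m satisfies β(G) + β(complement of G) = (3mn − 4)/2 and β(G) · β(complement of G) = mn(mn − 2)/2, where β denotes the vertex cover number. -/

import Mathlib

/-!
`G = armedCrownGraph m n` is triangle-free for `n ≥ 4`, so a vertex cover of `Gᶜ`, whose
complement is a clique of `G`, misses at most two vertices, and the two ends of any edge of `G`
are such a pair: `β(Gᶜ) = mn - 2`. Since `mn` is even, `G` has a perfect matching (along the arms
when `m` is even; otherwise the cycle edges `(2i, 2i+1)` and the arm edges `(2j-1, 2j)`) together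
with an independent set holding one end of every matching edge, which forces `β(G) = mn / 2`.
-/

/-- The independence number of a finite simple graph: the maximum cardinality of a
set of pairwise nonadjacent vertices. -/
noncomputable def indepNum {V : Type*} [Fintype V] (G : SimpleGraph V) : ℕ :=
  sSup {k : ℕ | ∃ s : Finset V, s.card = k ∧ ∀ u ∈ s, ∀ v ∈ s, ¬ G.Adj u v}

/-- The vertex cover number of a finite simple graph: the minimum cardinality of a
set of vertices containing at least one endpoint of every edge. -/
noncomputable def coverNum {V : Type*} [Fintype V] (G : SimpleGraph V) : ℕ :=
  sInf {k : ℕ | ∃ s : Finset V, s.card = k ∧ ∀ u v, G.Adj u v → u ∈ s ∨ v ∈ s}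

/-- The armed crown graph: vertices `(i, j)` with `i : Fin n`, `j : Fin m`; the vertices
`(i, 0)` form a cycle `C_n`, and for each `i` the vertices `(i, 0), (i, 1), …, (i, m-1)`
form a path `P_m` adjoined to the cycle vertex `(i, 0)`. -/
def armedCrownGraph (m n : ℕ) : SimpleGraph (Fin n × Fin m) :=
  SimpleGraph.fromRel (fun a b =>
    (a.2.val = 0 ∧ b.2.val = 0 ∧ (a.1.val + 1) % n = b.1.val) ∨
    (a.1 = b.1 ∧ a.2.val + 1 = b.2.val))

open Finset Function SimpleGraph

section VertexCover

variable {V : Type*} {G : SimpleGraph V}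

lemma SimpleGraph.IsClique.card_lt_of_cliqueFree {n : ℕ} (hG : G.CliqueFree n) {s : Finset V}
    (hs : G.IsClique s) : s.card < n := by
  by_contra! hn
  obtain ⟨t, hts, htn⟩ := exists_subset_card_eq hn
  exact hG t ⟨hs.subset (coe_subset.2 hts), htn⟩

variable [Fintype V]

lemma coverNum_le {s : Finset V} (hs : G.IsVertexCover s) : coverNum G ≤ s.card :=
  Nat.sInf_le ⟨s, rfl, fun _ _ huv => hs huv⟩

lemma exists_isVertexCover_card_eq_coverNum (G : SimpleGraph V) :
    ∃ s : Finset V, G.IsVertexCover s ∧ s.card = coverNum G := by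
  obtain ⟨s, hcard, hs⟩ := Nat.sInf_mem (s := {k : ℕ | ∃ s : Finset V, s.card = k ∧
    ∀ u v, G.Adj u v → u ∈ s ∨ v ∈ s}) ⟨_, univ, rfl, fun u _ _ => Or.inl (mem_univ u)⟩
  exact ⟨s, fun u v huv => hs u v huv, hcard⟩

variable [DecidableEq V]

lemma coverNum_le_card_sub {S : Finset V} (hS : G.IsIndepSet S) :
    coverNum G ≤ Fintype.card V - S.card := by
  rw [← card_compl]
  exact coverNum_le (by rwa [coe_compl, isVertexCover_compl])

lemma card_le_two_mul_card_of_mapsTo_compl {f : V → V} (hf : Injective f) {s : Finset V}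
    (hs : ∀ v ∉ s, f v ∈ s) : Fintype.card V ≤ 2 * s.card := by
  have : sᶜ.card ≤ s.card :=
    card_le_card_of_injOn f (fun v hv => hs v (mem_compl.1 hv)) hf.injOn
  rw [card_compl] at this
  omega

/-- Every vertex cover, and `S` as well, contains an end of each pair `{v, f v}`, so by injectivity
of `f` each has at least half of the vertices, while the cover `Sᶜ` has at most half. -/
lemma coverNum_eq_card_div_two {f : V → V} (hf : Injective f) (hadj : ∀ v, G.Adj v (f v))
    {S : Finset V} (hS : G.IsIndepSet S) (hfS : ∀ v ∉ S, f v ∈ S) :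
    coverNum G = Fintype.card V / 2 := by
  have hupper := coverNum_le_card_sub hS
  have hS_large := card_le_two_mul_card_of_mapsTo_compl hf hfS
  obtain ⟨s, hs, hs_card⟩ := exists_isVertexCover_card_eq_coverNum G
  have hlower := card_le_two_mul_card_of_mapsTo_compl hf fun v hv =>
    (hs (hadj v)).resolve_left hv
  omega

lemma coverNum_compl_of_cliqueFree_three (hG : G.CliqueFree 3) {a b : V} (hab : G.Adj a b) :
    coverNum Gᶜ = Fintype.card V - 2 := by
  apply le_antisymm
  · have hcover : Gᶜ.IsVertexCover (↑({a, b} : Finset V)ᶜ) := by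
      rw [coe_compl, isVertexCover_compl, isIndepSet_compl, coe_pair]
      exact isClique_pair.2 fun _ => hab
    have := coverNum_le hcover
    rwa [card_compl, card_pair hab.ne] at this
  · obtain ⟨s, hs, hs_card⟩ := exists_isVertexCover_card_eq_coverNum Gᶜ
    have hclique : G.IsClique (↑sᶜ : Set V) := by
      rw [← isIndepSet_compl, coe_compl, isIndepSet_compl_iff_isVertexCover]
      exact hs
    have := hclique.card_lt_of_cliqueFree hG
    rw [card_compl] at this
    omega

end VertexCover

lemma Nat.add_one_mod_eq_iff {n a b : ℕ} (ha : a < n) (hb : b < n) :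
    (a + 1) % n = b ↔ a + 1 = b ∨ (a + 1 = n ∧ b = 0) := by
  rcases (Nat.add_one_le_of_lt ha).lt_or_eq with h | h
  · rw [Nat.mod_eq_of_lt h]; omega
  · rw [h, Nat.mod_self]; omega

def pairPartner (k : ℕ) : ℕ := if k % 2 = 0 then k + 1 else k - 1

lemma pairPartner_cases (k : ℕ) :
    (k % 2 = 0 ∧ pairPartner k = k + 1) ∨ (k % 2 = 1 ∧ pairPartner k + 1 = k) := by
  unfold pairPartner
  split_ifs <;> omega

lemma pairPartner_pairPartner (k : ℕ) : pairPartner (pairPartner k) = k := by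
  have := pairPartner_cases k
  have := pairPartner_cases (pairPartner k)
  omega

lemma pairPartner_lt {k b : ℕ} (hk : k < b) (hb : Even b) : pairPartner k < b := by
  obtain ⟨c, rfl⟩ := hb
  have := pairPartner_cases k
  omega

namespace armedCrownGraph

variable {m n : ℕ}

lemma adj_iff {x y : Fin n × Fin m} :
    (armedCrownGraph m n).Adj x y ↔
      ¬(x.1.val = y.1.val ∧ x.2.val = y.2.val) ∧
      ((x.1.val = y.1.val ∧ (x.2.val + 1 = y.2.val ∨ y.2.val + 1 = x.2.val)) ∨
       (x.2.val = 0 ∧ y.2.val = 0 ∧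
        (x.1.val + 1 = y.1.val ∨ y.1.val + 1 = x.1.val ∨
         (x.1.val + 1 = n ∧ y.1.val = 0) ∨ (y.1.val + 1 = n ∧ x.1.val = 0)))) := by
  rw [armedCrownGraph, fromRel_adj, Nat.add_one_mod_eq_iff x.1.isLt y.1.isLt,
    Nat.add_one_mod_eq_iff y.1.isLt x.1.isLt]
  simp only [ne_eq, Prod.ext_iff, Fin.ext_iff]
  omega

lemma cliqueFree_three (hn : 4 ≤ n) : (armedCrownGraph m n).CliqueFree 3 := by
  intro s hs
  obtain ⟨a, b, c, hab, hac, hbc, -⟩ := is3Clique_iff.1 hs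
  rw [adj_iff] at hab hac hbc
  omega

lemma card_vertices : Fintype.card (Fin n × Fin m) = m * n := by
  simp [mul_comm]

lemma coverNum_of_even_left (hm : Even m) : coverNum (armedCrownGraph m n) = m * n / 2 := by
  let f : Fin n × Fin m → Fin n × Fin m := fun v =>
    (v.1, ⟨pairPartner v.2, pairPartner_lt v.2.isLt hm⟩)
  have hf : Involutive f := fun v => Prod.ext rfl (Fin.ext (pairPartner_pairPartner _))
  let S : Finset (Fin n × Fin m) := {v | v.2.val % 2 = 1}
  rw [← card_vertices]
  refine coverNum_eq_card_div_two (f := f) (S := S) hf.injective (fun v => ?_) ?_ (fun v hv => ?_)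
  · have := pairPartner_cases v.2
    rw [adj_iff]
    simp only [f, true_and]
    omega
  · intro u hu v hv _ huv
    simp only [S, coe_filter, mem_univ, true_and, Set.mem_ofPred_eq] at hu hv
    rw [adj_iff] at huv
    omega
  · have := pairPartner_cases v.2
    simp only [S, f, mem_filter, mem_univ, true_and] at hv ⊢
    omega

lemma coverNum_of_odd_of_even (hm : Odd m) (hn : Even n) :
    coverNum (armedCrownGraph m n) = m * n / 2 := by
  have hm' : Even (m - 1) := Nat.Odd.sub_odd hm odd_one
  let f : Fin n × Fin m → Fin n × Fin m := fun v =>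
    if h : v.2.val = 0 then (⟨pairPartner v.1, pairPartner_lt v.1.isLt hn⟩, v.2)
    else (v.1, ⟨pairPartner (v.2 - 1) + 1,
      by have := pairPartner_lt (b := m - 1) (k := v.2 - 1) (by omega) hm'; omega⟩)
  have hf : Involutive f := by
    intro v
    by_cases h0 : v.2.val = 0
    · simp [f, h0, pairPartner_pairPartner]
    · simp [f, h0, pairPartner_pairPartner, Prod.ext_iff, Fin.ext_iff]
      omega
  let S : Finset (Fin n × Fin m) := {v | v.2.val % 2 = v.1.val % 2}
  rw [← card_vertices]
  refine coverNum_eq_card_div_two (f := f) (S := S) hf.injective (fun v => ?_) ?_ (fun v hv => ?_)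
  · have := pairPartner_cases v.1
    have := pairPartner_cases (v.2 - 1)
    rw [adj_iff]
    simp only [f]
    split_ifs <;> simp only [true_and] <;> omega
  · obtain ⟨c, rfl⟩ := hn
    intro u hu v hv _ huv
    simp only [S, coe_filter, mem_univ, true_and, Set.mem_ofPred_eq] at hu hv
    rw [adj_iff] at huv
    omega
  · have := pairPartner_cases v.1
    have := pairPartner_cases (v.2 - 1)
    simp only [S, f, mem_filter, mem_univ, true_and] at hv ⊢
    split_ifs <;> simp only <;> omega

lemma coverNum_eq (h : Even (m * n)) : coverNum (armedCrownGraph m n) = m * n / 2 := by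
  rcases Nat.even_or_odd m with hm | hm
  · exact coverNum_of_even_left hm
  · exact coverNum_of_odd_of_even hm
      ((Nat.even_mul.1 h).resolve_left (Nat.not_even_iff_odd.2 hm))

lemma coverNum_compl_eq (hm : 1 ≤ m) (hn : 4 ≤ n) :
    coverNum (armedCrownGraph m n)ᶜ = m * n - 2 := by
  have hadj : (armedCrownGraph m n).Adj (⟨0, by omega⟩, ⟨0, hm⟩) (⟨1, by omega⟩, ⟨0, hm⟩) := by
    rw [adj_iff]
    simp
  rw [← card_vertices]
  exact coverNum_compl_of_cliqueFree_three (cliqueFree_three hn) hadj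

end armedCrownGraph

/-- For `m ≥ 1` and `n ≥ 4` with `mn` even, the armed crown graph `G` satisfies
`β(G) + β(Gᶜ) = (3mn-4)/2` and `β(G) * β(Gᶜ) = mn(mn-2)/2`. -/
theorem coverNum_armedCrownGraph_add_mul_complement (m n : ℕ) (hm : 1 ≤ m) (hn : 4 ≤ n)
    (h : Even (m * n)) :
    coverNum (armedCrownGraph m n) + coverNum (armedCrownGraph m n)ᶜ =
      (3 * m * n - 4) / 2 ∧
    coverNum (armedCrownGraph m n) * coverNum (armedCrownGraph m n)ᶜ =
      m * n * (m * n - 2) / 2 := by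
  rw [armedCrownGraph.coverNum_eq h, armedCrownGraph.coverNum_compl_eq hm hn]
  refine ⟨?_, Nat.div_mul_right_comm (even_iff_two_dvd.1 h) _⟩
  obtain ⟨k, hk⟩ := h
  rw [mul_assoc, hk]
  omega
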